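/- arXiv:2604.19617 — 5 statements merged into one kernel-verified Lean document; each statement's English description precedes it below -/
import Mathlib

section
/- Let (X,Σ,μ) be a measure space and 1 ≤ p < ∞. If a family 𝓕 ⊆ Λ^p(X) is totally bounded with respect to the F-norm distance d(f,g) = ν_p(f−g), then for every M > 0 the truncated family T_M(𝓕) = { T_M ∘ f : f ∈ 𝓕 } is totally bounded in L^p(X) with respect to the L^p norm distance. -/
open MeasureTheory ENNReal Filter Topology

/-- The F-norm `ν_p(g) = (∫ min(|g|,1)^p dμ)^{1/p}` of the asymptotic `L_p` space. -/
noncomputable def nuF {X : Type*} [MeasurableSpace X] (μ : Measure X) (p : ℝ) (g : X → ℝ) :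
    ℝ≥0∞ :=
  (∫⁻ x, ENNReal.ofReal (min |g x| 1 ^ p) ∂μ) ^ (1 / p)

/-- The `L^p` norm `(∫ |g|^p dμ)^{1/p}`. -/
noncomputable def lpNorm {X : Type*} [MeasurableSpace X] (μ : Measure X) (p : ℝ) (g : X → ℝ) :
    ℝ≥0∞ :=
  (∫⁻ x, ENNReal.ofReal (|g x| ^ p) ∂μ) ^ (1 / p)

/-- Membership in the asymptotic `L_p` space `Λ^p(X)`. -/
def MemLambda {X : Type*} [MeasurableSpace X] (μ : Measure X) (p : ℝ) (f : X → ℝ) : Prop :=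
  Measurable f ∧ ∫⁻ x, ENNReal.ofReal (min |f x| 1 ^ p) ∂μ < ⊤

/-- Membership in `L^p(X)`. -/
def MemLp' {X : Type*} [MeasurableSpace X] (μ : Measure X) (p : ℝ) (f : X → ℝ) : Prop :=
  Measurable f ∧ ∫⁻ x, ENNReal.ofReal (|f x| ^ p) ∂μ < ⊤

/-- The truncation map `T_M(t) = max(-M, min(t, M))`. -/
def trunc (M : ℝ) (t : ℝ) : ℝ := max (-M) (min t M)

/-- A family `F` is totally bounded with respect to a distance `d` if for every `ε > 0`
there are finitely many functions such that every `f ∈ F` is within `ε` of one of them. -/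
def TotallyBoundedDist {X : Type*} (d : (X → ℝ) → (X → ℝ) → ℝ≥0∞) (F : Set (X → ℝ)) : Prop :=
  ∀ ε : ℝ≥0∞, 0 < ε → ∃ G : Finset (X → ℝ), ∀ f ∈ F, ∃ g ∈ G, d f g < ε

/-!
Truncation at level `M` is `1`-Lipschitz and takes values in `[-M, M]`, so
`|T_M a - T_M b| ≤ max (2M) 1 · min(|a - b|, 1)`. Integrating the `p`-th power gives
`‖T_M f - T_M g‖_p ≤ max (2M) 1 · ν_p(f - g)`, so a finite `ε / max (2M) 1`-net of `𝓕` for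
`ν_p` is mapped by `T_M` to a finite `ε`-net of `T_M(𝓕)` in `L^p`.
-/

lemma abs_trunc_le {M : ℝ} (hM : 0 ≤ M) (t : ℝ) : |trunc M t| ≤ M :=
  abs_le.mpr ⟨le_max_left _ _, max_le (by linarith) (min_le_right _ _)⟩

lemma abs_trunc_sub_trunc_le (M a b : ℝ) : |trunc M a - trunc M b| ≤ |a - b| := by
  unfold trunc
  rw [max_comm (-M), max_comm (-M)]
  calc |max (min a M) (-M) - max (min b M) (-M)| ≤ |min a M - min b M| :=
        abs_max_sub_max_le_abs _ _ _
    _ ≤ max |a - b| |M - M| := abs_min_sub_min_le_max _ _ _ _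
    _ = |a - b| := by simp

lemma abs_trunc_sub_trunc_le_mul_min {M : ℝ} (hM : 0 ≤ M) (a b : ℝ) :
    |trunc M a - trunc M b| ≤ max (2 * M) 1 * min |a - b| 1 := by
  rcases le_total |a - b| 1 with h | h
  · rw [min_eq_left h]
    calc |trunc M a - trunc M b| ≤ |a - b| := abs_trunc_sub_trunc_le M a b
      _ ≤ max (2 * M) 1 * |a - b| := le_mul_of_one_le_left (abs_nonneg _) (le_max_right _ _)
  · rw [min_eq_right h, mul_one]
    calc |trunc M a - trunc M b| ≤ |trunc M a| + |trunc M b| := abs_sub _ _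
      _ ≤ 2 * M := by linarith [abs_trunc_le hM a, abs_trunc_le hM b]
      _ ≤ max (2 * M) 1 := le_max_left _ _

lemma lpNorm_le_ofReal_mul_nuF {X : Type*} [MeasurableSpace X] (μ : Measure X) {p C : ℝ}
    (hp : 0 < p) (hC : 0 ≤ C) {u g : X → ℝ} (h : ∀ x, |u x| ≤ C * min |g x| 1) :
    lpNorm μ p u ≤ ENNReal.ofReal C * nuF μ p g := by
  have h_pow : ∀ x, ENNReal.ofReal (|u x| ^ p)
      ≤ ENNReal.ofReal (C ^ p) * ENNReal.ofReal (min |g x| 1 ^ p) := fun x => by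
    rw [← ENNReal.ofReal_mul (by positivity), ← Real.mul_rpow hC (by positivity)]
    exact ENNReal.ofReal_le_ofReal (Real.rpow_le_rpow (abs_nonneg _) (h x) hp.le)
  have h_const : ENNReal.ofReal (C ^ p) ^ (1 / p) = ENNReal.ofReal C := by
    rw [← ENNReal.ofReal_rpow_of_nonneg (by positivity) (by positivity),
      ← ENNReal.rpow_mul, mul_one_div_cancel hp.ne', ENNReal.rpow_one]
  calc lpNorm μ p u
      ≤ (∫⁻ x, ENNReal.ofReal (C ^ p) * ENNReal.ofReal (min |g x| 1 ^ p) ∂μ) ^ (1 / p) :=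
        ENNReal.rpow_le_rpow (lintegral_mono h_pow) (by positivity)
    _ = ENNReal.ofReal C * nuF μ p g := by
        rw [lintegral_const_mul' _ _ ENNReal.ofReal_ne_top,
          ENNReal.mul_rpow_of_nonneg _ _ (by positivity), h_const, nuF]

lemma lpNorm_trunc_comp_sub_le {X : Type*} [MeasurableSpace X] (μ : Measure X) {p M : ℝ}
    (hp : 0 < p) (hM : 0 ≤ M) (f g : X → ℝ) :
    lpNorm μ p (trunc M ∘ f - trunc M ∘ g) ≤ ENNReal.ofReal (max (2 * M) 1) * nuF μ p (f - g) :=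
  lpNorm_le_ofReal_mul_nuF μ hp (by positivity) fun x =>
    abs_trunc_sub_trunc_le_mul_min hM (f x) (g x)

lemma TotallyBoundedDist.image_of_le_mul {X : Type*} {d d' : (X → ℝ) → (X → ℝ) → ℝ≥0∞}
    {F : Set (X → ℝ)} (hF : TotallyBoundedDist d F) (φ : (X → ℝ) → X → ℝ) {C : ℝ≥0∞}
    (hC : C ≠ ⊤) (hφ : ∀ f g, d' (φ f) (φ g) ≤ C * d f g) :
    TotallyBoundedDist d' (φ '' F) := by
  classical
  intro ε hε
  obtain ⟨G, hG⟩ := hF (ε / C) (ENNReal.div_pos hε.ne' hC)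
  refine ⟨G.image φ, ?_⟩
  rintro _ ⟨f, hf, rfl⟩
  obtain ⟨g, hg, hfg⟩ := hG f hf
  exact ⟨φ g, Finset.mem_image_of_mem φ hg,
    (hφ f g).trans_lt (ENNReal.mul_lt_of_lt_div' hfg)⟩

theorem stmt2_general {X : Type*} [MeasurableSpace X] (μ : Measure X) (p : ℝ) (hp : 1 ≤ p)
    (F : Set (X → ℝ))
    (htb : TotallyBoundedDist (fun f g => nuF μ p (f - g)) F) :
    ∀ M : ℝ, 0 < M →
      TotallyBoundedDist (fun u v => lpNorm μ p (u - v)) ((fun f => trunc M ∘ f) '' F) :=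
  fun M hM => htb.image_of_le_mul (fun f => trunc M ∘ f) ENNReal.ofReal_ne_top
    (lpNorm_trunc_comp_sub_le μ (zero_lt_one.trans_le hp) hM.le)

theorem stmt2 {X : Type*} [MeasurableSpace X] (μ : Measure X) (p : ℝ) (hp : 1 ≤ p)
    (F : Set (X → ℝ)) (hF : ∀ f ∈ F, MemLambda μ p f)
    (htb : TotallyBoundedDist (fun f g => nuF μ p (f - g)) F) :
    ∀ M : ℝ, 0 < M →
      TotallyBoundedDist (fun u v => lpNorm μ p (u - v)) ((fun f => trunc M ∘ f) '' F) :=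
  stmt2_general μ p hp F htb
end

section
/- Let (X,Σ,μ) be a measure space and 1 ≤ p < ∞. Suppose a family 𝓕 ⊆ Λ^p(X) satisfies: (i) lim_{M→∞} sup_{f∈𝓕} ν_p(f − T_M f) = 0, and (ii) for every M > 0 the truncated family T_M(𝓕) is totally bounded in L^p(X) with respect to the L^p norm distance. Then 𝓕 is totally bounded with respect to the F-norm distance d(f,g) = ν_p(f−g). -/
open MeasureTheory ENNReal Filter Topology

/-!
Truncate at a level `M` where every `f - T_M f` has `ν_p`-size below `ε/2`, and take an
`L^p`-net of `T_M(𝓕)` at scale `ε/2`. If `g` is within `ε/2` of `T_M f`, the pointwise bound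
`min(|f - g|, 1) ≤ min(|f - T_M f|, 1) + |T_M f - g|` together with
`(a + b)^p ≤ 2^(p-1) (a^p + b^p)` gives `ν_p(f - g)^p < 2^(p-1) · 2 (ε/2)^p = ε^p`.
-/

lemma min_abs_sub_one_le (a b c : ℝ) : min |a - c| 1 ≤ min |a - b| 1 + |b - c| := by
  rcases le_total |a - b| 1 with h | h
  · rw [min_eq_left h]
    exact (min_le_left _ _).trans (abs_sub_le a b c)
  · rw [min_eq_right h]
    linarith [min_le_right |a - c| 1, abs_nonneg (b - c)]

lemma measurable_trunc (M : ℝ) : Measurable (trunc M) := by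
  unfold trunc
  fun_prop

section
variable {X : Type*} [MeasurableSpace X] {μ : Measure X} {p : ℝ}

lemma nuF_lt_iff (hp : 0 < p) {g : X → ℝ} {δ : ℝ≥0∞} :
    nuF μ p g < δ ↔ ∫⁻ x, ENNReal.ofReal (min |g x| 1 ^ p) ∂μ < δ ^ p := by
  rw [nuF, one_div, ENNReal.rpow_inv_lt_iff hp]

lemma lpNorm_lt_iff (hp : 0 < p) {g : X → ℝ} {δ : ℝ≥0∞} :
    lpNorm μ p g < δ ↔ ∫⁻ x, ENNReal.ofReal (|g x| ^ p) ∂μ < δ ^ p := by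
  rw [_root_.lpNorm, one_div, ENNReal.rpow_inv_lt_iff hp]

lemma ofReal_min_abs_sub_rpow_le (hp : 1 ≤ p) (a b c : ℝ) :
    ENNReal.ofReal (min |a - c| 1 ^ p) ≤
      2 ^ (p - 1) * (ENNReal.ofReal (min |a - b| 1 ^ p) + ENNReal.ofReal (|b - c| ^ p)) := by
  have hp0 : 0 ≤ p := by linarith
  have hmin : ∀ t : ℝ, 0 ≤ min |t| 1 := fun t => le_min (abs_nonneg t) zero_le_one
  rw [← ENNReal.ofReal_rpow_of_nonneg (hmin _) hp0, ← ENNReal.ofReal_rpow_of_nonneg (hmin _) hp0,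
    ← ENNReal.ofReal_rpow_of_nonneg (abs_nonneg _) hp0]
  calc ENNReal.ofReal (min |a - c| 1) ^ p
      ≤ (ENNReal.ofReal (min |a - b| 1) + ENNReal.ofReal |b - c|) ^ p := by
        rw [← ENNReal.ofReal_add (hmin _) (abs_nonneg _)]
        gcongr
        exact min_abs_sub_one_le a b c
    _ ≤ _ := ENNReal.rpow_add_le_mul_rpow_add_rpow _ _ hp

/-- `g` need not be measurable, so Minkowski's inequality is not available; the power mean
inequality `(a + b)^p ≤ 2^(p-1) (a^p + b^p)` only costs the factor `2`. -/
lemma nuF_sub_lt_two_mul (hp : 1 ≤ p) {f T g : X → ℝ} {δ : ℝ≥0∞} (hf : Measurable f)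
    (hT : Measurable T) (hfT : nuF μ p (f - T) < δ) (hTg : lpNorm μ p (T - g) < δ) :
    nuF μ p (f - g) < 2 * δ := by
  have hp0 : 0 < p := by linarith
  rw [nuF_lt_iff hp0] at hfT ⊢
  rw [lpNorm_lt_iff hp0] at hTg
  have hfT_meas : Measurable fun x => ENNReal.ofReal (min |(f - T) x| 1 ^ p) := by fun_prop
  calc ∫⁻ x, ENNReal.ofReal (min |(f - g) x| 1 ^ p) ∂μ
      ≤ ∫⁻ x, 2 ^ (p - 1) *
          (ENNReal.ofReal (min |(f - T) x| 1 ^ p) + ENNReal.ofReal (|(T - g) x| ^ p)) ∂μ :=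
        lintegral_mono fun x => ofReal_min_abs_sub_rpow_le hp (f x) (T x) (g x)
    _ = 2 ^ (p - 1) * (∫⁻ x, ENNReal.ofReal (min |(f - T) x| 1 ^ p) ∂μ
          + ∫⁻ x, ENNReal.ofReal (|(T - g) x| ^ p) ∂μ) := by
        rw [lintegral_const_mul' _ _ (by simp), lintegral_add_left hfT_meas]
    _ < 2 ^ (p - 1) * (δ ^ p + δ ^ p) := by
        gcongr
        all_goals simp
    _ = (2 * δ) ^ p := by
        rw [← two_mul, ← mul_assoc, ENNReal.mul_rpow_of_nonneg _ _ hp0.le]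
        congr 1
        conv_rhs => rw [← sub_add_cancel p 1, ENNReal.rpow_add _ _ two_ne_zero ofNat_ne_top,
          ENNReal.rpow_one]
end

theorem stmt3 {X : Type*} [MeasurableSpace X] (μ : Measure X) (p : ℝ) (hp : 1 ≤ p)
    (F : Set (X → ℝ)) (hF : ∀ f ∈ F, MemLambda μ p f)
    (h1 : Tendsto (fun M : ℝ => ⨆ f ∈ F, nuF μ p (f - trunc M ∘ f)) atTop (𝓝 0))
    (h2 : ∀ M : ℝ, 0 < M →
      TotallyBoundedDist (fun u v => lpNorm μ p (u - v)) ((fun f => trunc M ∘ f) '' F)) :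
    TotallyBoundedDist (fun f g => nuF μ p (f - g)) F := by
  intro ε hε
  have hδ : 0 < ε / 2 := ENNReal.half_pos hε.ne'
  obtain ⟨M, hM, hMpos⟩ :=
    ((h1.eventually (gt_mem_nhds hδ)).and (eventually_gt_atTop 0)).exists
  obtain ⟨G, hG⟩ := h2 M hMpos (ε / 2) hδ
  refine ⟨G, fun f hf => ?_⟩
  obtain ⟨g, hgG, hTg⟩ := hG (trunc M ∘ f) ⟨f, hf, rfl⟩
  have hfm : Measurable f := (hF f hf).1
  have hfT : nuF μ p (f - trunc M ∘ f) < ε / 2 :=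
    (le_biSup (fun f => nuF μ p (f - trunc M ∘ f)) hf).trans_lt hM
  refine ⟨g, hgG, ?_⟩
  calc nuF μ p (f - g) < 2 * (ε / 2) :=
        nuF_sub_lt_two_mul hp hfm ((measurable_trunc M).comp hfm) hfT hTg
    _ = ε := ENNReal.mul_div_cancel two_ne_zero ofNat_ne_top
end

section
/- Let (X,Σ,μ) be a measure space, 1 ≤ p < ∞, and let f : X → ℝ be measurable. Then f is almost in L_p (i.e., for every δ > 0 there exists a measurable set E_δ ⊆ X with μ(E_δ) < δ and f·χ_{X∖E_δ} ∈ L^p(X)) if and only if min(|f|,1) ∈ L^p(X). -/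
open MeasureTheory ENNReal Filter Topology

theorem stmt4 {X : Type*} [MeasurableSpace X] (μ : Measure X) (p : ℝ) (hp : 1 ≤ p)
    (f : X → ℝ) (hf : Measurable f) :
    (∀ δ : ℝ≥0∞, 0 < δ → ∃ E : Set X, MeasurableSet E ∧ μ E < δ ∧
        MemLp' μ p (Eᶜ.indicator f)) ↔
      MemLp' μ p (fun x => min |f x| 1) := by
  have hp0 : 0 < p := lt_of_lt_of_le one_pos hp
  have hrw : ∀ x : X, ENNReal.ofReal (|min |f x| 1| ^ p) = ENNReal.ofReal (min |f x| 1 ^ p) :=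
    fun x => by rw [abs_of_nonneg (le_min (abs_nonneg _) zero_le_one)]
  constructor
  · intro h
    obtain ⟨E, hE, hμE, hmeas, hint⟩ := h 1 one_pos
    refine ⟨(hf.abs.min measurable_const), ?_⟩
    simp only [hrw]
    have hbound : ∀ x, ENNReal.ofReal (min |f x| 1 ^ p) ≤
        ENNReal.ofReal (|Eᶜ.indicator f x| ^ p) + E.indicator (fun _ => (1 : ℝ≥0∞)) x := by
      intro x
      by_cases hx : x ∈ E
      · have h1 : min |f x| 1 ^ p ≤ 1 := by
          calc min |f x| 1 ^ p ≤ (1 : ℝ) ^ p :=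
            Real.rpow_le_rpow (le_min (abs_nonneg _) zero_le_one) (min_le_right _ _) hp0.le
          _ = 1 := Real.one_rpow p
        rw [Set.indicator_of_notMem (by simpa using hx), Set.indicator_of_mem hx,
          abs_zero, Real.zero_rpow hp0.ne', ENNReal.ofReal_zero, zero_add]
        exact ENNReal.ofReal_le_one.2 h1
      · have h1 : min |f x| 1 ^ p ≤ |f x| ^ p :=
          Real.rpow_le_rpow (le_min (abs_nonneg _) zero_le_one) (min_le_left _ _) hp0.le
        rw [Set.indicator_of_mem (by simpa using hx : x ∈ Eᶜ) f,
          Set.indicator_of_notMem hx, add_zero]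
        exact ENNReal.ofReal_le_ofReal h1
    calc ∫⁻ x, ENNReal.ofReal (min |f x| 1 ^ p) ∂μ
        ≤ ∫⁻ x, (ENNReal.ofReal (|Eᶜ.indicator f x| ^ p) +
            E.indicator (fun _ => (1 : ℝ≥0∞)) x) ∂μ := lintegral_mono hbound
      _ = (∫⁻ x, ENNReal.ofReal (|Eᶜ.indicator f x| ^ p) ∂μ) + μ E := by
          rw [lintegral_add_right _ (measurable_const.indicator hE),
            lintegral_indicator_const hE, one_mul]
      _ < ⊤ := ENNReal.add_lt_top.2 ⟨hint, hμE.trans_le le_top⟩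
  · intro ⟨hg, hI⟩ δ hδ
    simp only [hrw] at hI
    set S : ℕ → Set X := fun n => {x | ((n : ℝ) + 1) ≤ |f x|} with hS
    have hSm : ∀ n, MeasurableSet (S n) := fun n =>
      measurableSet_le measurable_const hf.abs
    have hS0 : μ (S 0) < ⊤ := by
      have hle : μ (S 0) ≤ ∫⁻ x, ENNReal.ofReal (min |f x| 1 ^ p) ∂μ := by
        rw [← lintegral_indicator_one (hSm 0)]
        refine lintegral_mono fun x => ?_
        by_cases hx : x ∈ S 0
        · have h1 : (1 : ℝ) ≤ |f x| := by
            have := hx; simp only [hS, Set.mem_setOf_eq] at this; linarith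
          have hm : min |f x| 1 = 1 := min_eq_right h1
          simp [Set.indicator_of_mem hx, hm, Real.one_rpow]
        · simp [Set.indicator_of_notMem hx]
      exact hle.trans_lt hI
    have hanti : Antitone S := by
      intro m n hmn x hx
      simp only [hS, Set.mem_setOf_eq] at hx ⊢
      have : (m : ℝ) ≤ n := Nat.cast_le.2 hmn
      linarith
    have hiInter : ⋂ n, S n = ∅ := by
      ext x
      simp only [Set.mem_iInter, Set.mem_empty_iff_false, iff_false]
      intro hx
      obtain ⟨n, hn⟩ := exists_nat_gt (|f x|)
      have := hx n; simp only [hS, Set.mem_setOf_eq] at this; linarith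
    have htend : Tendsto (fun n => μ (S n)) atTop (𝓝 0) := by
      have := MeasureTheory.tendsto_measure_iInter_atTop
        (fun n => (hSm n).nullMeasurableSet) hanti ⟨0, hS0.ne⟩
      rwa [hiInter, measure_empty] at this
    obtain ⟨n, hn⟩ := (htend.eventually_lt_const hδ).exists
    refine ⟨S n, hSm n, hn, hf.indicator (hSm n).compl, ?_⟩
    have hbound : ∀ x, ENNReal.ofReal (|(S n)ᶜ.indicator f x| ^ p) ≤
        ENNReal.ofReal (((n : ℝ) + 1) ^ p) * ENNReal.ofReal (min |f x| 1 ^ p) := by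
      intro x
      by_cases hx : x ∈ S n
      · rw [Set.indicator_of_notMem (by simpa using hx)]
        simp [abs_zero, Real.zero_rpow hp0.ne']
      · rw [Set.indicator_of_mem (by simpa using hx : x ∈ (S n)ᶜ) f]
        have hlt : |f x| < (n : ℝ) + 1 := by
          simp only [hS, Set.mem_setOf_eq] at hx; linarith [not_le.1 hx]
        rw [← ENNReal.ofReal_mul (by positivity), ← Real.mul_rpow (by positivity)
          (le_min (abs_nonneg _) zero_le_one)]
        refine ENNReal.ofReal_le_ofReal (Real.rpow_le_rpow (abs_nonneg _) ?_ hp0.le)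
        rcases le_or_gt (|f x|) 1 with h1 | h1
        · rw [min_eq_left h1]
          nlinarith [abs_nonneg (f x), Nat.cast_nonneg (α := ℝ) n]
        · rw [min_eq_right h1.le, mul_one]
          exact hlt.le
    calc ∫⁻ x, ENNReal.ofReal (|(S n)ᶜ.indicator f x| ^ p) ∂μ
        ≤ ∫⁻ x, ENNReal.ofReal (((n : ℝ) + 1) ^ p) *
            ENNReal.ofReal (min |f x| 1 ^ p) ∂μ := lintegral_mono hbound
      _ = ENNReal.ofReal (((n : ℝ) + 1) ^ p) *
            ∫⁻ x, ENNReal.ofReal (min |f x| 1 ^ p) ∂μ := lintegral_const_mul _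
              (((Real.continuous_rpow_const hp0.le).measurable.comp (hf.abs.min measurable_const)).ennreal_ofReal)
      _ < ⊤ := ENNReal.mul_lt_top ofReal_lt_top hI
end

section
/- Let (X,Σ,μ) be a measure space, 1 ≤ p < ∞, and let f : X → ℝ be measurable. Then there exists a sequence {f_k} of functions in L^p(X) such that ν_p(f_k − f) → 0 as k → ∞ if and only if min(|f|,1) ∈ L^p(X). -/
open MeasureTheory ENNReal Filter Topology

lemma min_add_min_le (a b : ℝ) (ha : 0 ≤ a) (hb : 0 ≤ b) :
    min (a + b) 1 ≤ min a 1 + min b 1 := by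
  rcases le_or_gt a 1 with h1 | h1 <;> rcases le_or_gt b 1 with h2 | h2
  · rw [min_eq_left h1, min_eq_left h2]; exact min_le_left _ _
  all_goals
    refine (min_le_right _ _).trans ?_
  · rw [min_eq_right h2.le, min_eq_left h1]; linarith
  · rw [min_eq_right h1.le, min_eq_left h2]; linarith
  · rw [min_eq_right h1.le, min_eq_right h2.le]; linarith

lemma rpow_add_le (x y p : ℝ) (hx : 0 ≤ x) (hy : 0 ≤ y) (hp : 0 ≤ p) :
    (x + y) ^ p ≤ 2 ^ p * (x ^ p + y ^ p) := by
  have hm : x + y ≤ 2 * max x y := by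
    rcases le_total x y with h | h
    · simp [max_eq_right h]; linarith
    · simp [max_eq_left h]; linarith
  calc (x + y) ^ p ≤ (2 * max x y) ^ p :=
        Real.rpow_le_rpow (by linarith) hm hp
    _ = 2 ^ p * max x y ^ p := Real.mul_rpow (by norm_num) (le_max_of_le_left hx)
    _ ≤ 2 ^ p * (x ^ p + y ^ p) := by
        gcongr
        rcases le_total x y with h | h
        · rw [max_eq_right h]; nlinarith [Real.rpow_nonneg hx p]
        · rw [max_eq_left h]; nlinarith [Real.rpow_nonneg hy p]

lemma abs_trunc (M t : ℝ) (hM : 0 < M) : |max (-M) (min t M)| = min |t| M := by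
  rcases le_total 0 t with ht | ht
  · rw [min_comm t M, max_eq_right (le_trans (by linarith) (le_min hM.le ht)),
      abs_of_nonneg (le_min hM.le ht), abs_of_nonneg ht, min_comm]
  · rw [min_eq_left (ht.trans hM.le), abs_of_nonpos ht]
    rcases le_total (-M) t with h | h
    · rw [max_eq_right h, abs_of_nonpos ht, min_eq_left (by linarith)]
    · rw [max_eq_left h, abs_of_nonpos (by linarith), min_eq_right (by linarith), neg_neg]

lemma abs_trunc_sub (M t : ℝ) (hM : 0 ≤ M) : |max (-M) (min t M) - t| ≤ |t| := by
  rcases le_total t M with h1 | h1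
  · rcases le_total (-M) t with h2 | h2
    · rw [min_eq_left h1, max_eq_right h2]; simp
    · rw [min_eq_left h1, max_eq_left h2, abs_of_nonneg (by linarith),
        abs_of_nonpos (by linarith)]; linarith
  · rw [min_eq_right h1, max_eq_right (by linarith), abs_of_nonpos (by linarith),
      abs_of_nonneg (by linarith)]; linarith

lemma min_le_mul_min (a M : ℝ) (ha : 0 ≤ a) (hM : 1 ≤ M) : min a M ≤ M * min a 1 := by
  rcases le_total a 1 with h | h
  · rw [min_eq_left (h.trans hM), min_eq_left h]; nlinarith
  · rw [min_eq_right h]; exact (min_le_right _ _).trans (by linarith)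

theorem stmt5 {X : Type*} [MeasurableSpace X] (μ : Measure X) (p : ℝ) (hp : 1 ≤ p)
    (f : X → ℝ) (hf : Measurable f) :
    (∃ fk : ℕ → X → ℝ, (∀ k, MemLp' μ p (fk k)) ∧
        Tendsto (fun k => nuF μ p (fk k - f)) atTop (𝓝 0)) ↔
      MemLp' μ p (fun x => min |f x| 1) := by
  have hp0 : 0 < p := lt_of_lt_of_le one_pos hp
  have hp0' : (0:ℝ) < 1 / p := by positivity
  constructor
  · rintro ⟨fk, hfk, htend⟩
    -- pick k with nuF < 1
    have h1 : ∀ᶠ k in atTop, nuF μ p (fk k - f) < 1 :=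
      htend.eventually_lt_const (by norm_num)
    obtain ⟨k, hk⟩ := h1.exists
    set g := fk k with hg
    have hgm : Measurable g := (hfk k).1
    have hI : ∫⁻ x, ENNReal.ofReal (min |g x - f x| 1 ^ p) ∂μ < ⊤ := by
      by_contra h
      push_neg at h
      have : nuF μ p (fk k - f) = ⊤ := by
        rw [nuF]
        simp only [Pi.sub_apply, ← hg]
        rw [top_le_iff.mp h, ENNReal.top_rpow_of_pos hp0']
      rw [this] at hk
      exact absurd hk (by simp)
    refine ⟨(hf.abs.min measurable_const), ?_⟩
    have hbound : ∀ x, ENNReal.ofReal (|min |f x| 1| ^ p) ≤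
        ENNReal.ofReal (2 ^ p) *
          (ENNReal.ofReal (min |g x - f x| 1 ^ p) + ENNReal.ofReal (|g x| ^ p)) := by
      intro x
      have habs : |f x| ≤ |g x - f x| + |g x| := by
        have := abs_sub_abs_le_abs_sub (f x) (g x)
        have := abs_sub_comm (f x) (g x)
        nlinarith [abs_nonneg (g x - f x), abs_nonneg (g x), abs_sub_abs_le_abs_sub (f x) (g x), abs_sub_comm (g x) (f x)]
      have step1 : min |f x| 1 ≤ min |g x - f x| 1 + min |g x| 1 :=
        le_trans (min_le_min habs le_rfl)
          (min_add_min_le _ _ (abs_nonneg _) (abs_nonneg _))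
      have step2 : min |f x| 1 ^ p ≤ 2 ^ p * (min |g x - f x| 1 ^ p + min |g x| 1 ^ p) := by
        refine le_trans (Real.rpow_le_rpow (le_min (abs_nonneg _) one_pos.le) step1 hp0.le) ?_
        exact rpow_add_le _ _ p (le_min (abs_nonneg _) one_pos.le)
          (le_min (abs_nonneg _) one_pos.le) hp0.le
      have step3 : min |g x| 1 ^ p ≤ |g x| ^ p :=
        Real.rpow_le_rpow (le_min (abs_nonneg _) one_pos.le) (min_le_left _ _) hp0.le
      rw [abs_of_nonneg (le_min (abs_nonneg (f x)) one_pos.le)]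
      refine le_trans (ENNReal.ofReal_le_ofReal
        (show min |f x| 1 ^ p ≤ 2 ^ p * (min |g x - f x| 1 ^ p + |g x| ^ p) by nlinarith [Real.rpow_nonneg (by norm_num : (0:ℝ) ≤ 2) p])) ?_
      rw [ENNReal.ofReal_mul (by positivity),
        ENNReal.ofReal_add (by positivity) (by positivity)]
    calc ∫⁻ x, ENNReal.ofReal (|min |f x| 1| ^ p) ∂μ
        ≤ ∫⁻ x, ENNReal.ofReal (2 ^ p) *
            (ENNReal.ofReal (min |g x - f x| 1 ^ p) + ENNReal.ofReal (|g x| ^ p)) ∂μ :=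
          lintegral_mono hbound
      _ = ENNReal.ofReal (2 ^ p) *
            ∫⁻ x, (ENNReal.ofReal (min |g x - f x| 1 ^ p) + ENNReal.ofReal (|g x| ^ p)) ∂μ :=
          lintegral_const_mul' _ _ ENNReal.ofReal_ne_top
      _ = ENNReal.ofReal (2 ^ p) *
            ((∫⁻ x, ENNReal.ofReal (min |g x - f x| 1 ^ p) ∂μ) +
              ∫⁻ x, ENNReal.ofReal (|g x| ^ p) ∂μ) := by
          rw [lintegral_add_left]
          exact (ENNReal.measurable_ofReal.comp
            (((((hgm.sub hf).abs).min measurable_const).pow_const p)))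
      _ < ⊤ := ENNReal.mul_lt_top ENNReal.ofReal_lt_top
          (ENNReal.add_lt_top.mpr ⟨hI, (hfk k).2⟩)
  · rintro ⟨_, hfin⟩
    set fk : ℕ → X → ℝ := fun k x => max (-((k:ℝ)+1)) (min (f x) ((k:ℝ)+1)) with hfk
    have hM : ∀ k : ℕ, (0:ℝ) < (k:ℝ)+1 := fun k => by positivity
    have hfkm : ∀ k, Measurable (fk k) :=
      fun k => measurable_const.max (hf.min measurable_const)
    refine ⟨fk, fun k => ⟨hfkm k, ?_⟩, ?_⟩
    · -- fk k ∈ L^p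
      calc ∫⁻ x, ENNReal.ofReal (|fk k x| ^ p) ∂μ
          ≤ ∫⁻ x, ENNReal.ofReal (((k:ℝ)+1) ^ p) * ENNReal.ofReal (|min |f x| 1| ^ p) ∂μ := by
            refine lintegral_mono fun x => ?_
            rw [← ENNReal.ofReal_mul (by positivity)]
            refine ENNReal.ofReal_le_ofReal ?_
            have h1 : |fk k x| = min |f x| ((k:ℝ)+1) := abs_trunc _ _ (hM k)
            rw [h1, abs_of_nonneg (le_min (abs_nonneg (f x)) one_pos.le),
              ← Real.mul_rpow (by positivity) (by positivity)]
            exact Real.rpow_le_rpow (le_min (abs_nonneg _) (by positivity))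
              (min_le_mul_min _ _ (abs_nonneg _) (by linarith [Nat.cast_nonneg (α := ℝ) k])) hp0.le
        _ = ENNReal.ofReal (((k:ℝ)+1) ^ p) * ∫⁻ x, ENNReal.ofReal (|min |f x| 1| ^ p) ∂μ :=
            lintegral_const_mul' _ _ ENNReal.ofReal_ne_top
        _ < ⊤ := ENNReal.mul_lt_top ENNReal.ofReal_lt_top hfin
    · -- convergence
      have key : Tendsto (fun k => ∫⁻ x, ENNReal.ofReal (min |fk k x - f x| 1 ^ p) ∂μ)
          atTop (𝓝 0) := by
        have := tendsto_lintegral_of_dominated_convergence (μ := μ)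
          (F := fun k x => ENNReal.ofReal (min |fk k x - f x| 1 ^ p))
          (f := fun _ => 0)
          (fun x => ENNReal.ofReal (|min |f x| 1| ^ p))
          (fun k => ENNReal.measurable_ofReal.comp
            ((((hfkm k).sub hf).abs.min measurable_const).pow_const p))
          (fun k => Filter.Eventually.of_forall fun x => by
            refine ENNReal.ofReal_le_ofReal ?_
            rw [abs_of_nonneg (le_min (abs_nonneg (f x)) one_pos.le)]
            exact Real.rpow_le_rpow (le_min (abs_nonneg _) one_pos.le)
              (min_le_min (abs_trunc_sub _ _ (hM k).le) le_rfl) hp0.le)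
          hfin.ne
          (Filter.Eventually.of_forall fun x => ?_)
        · simpa using this
        · refine Tendsto.congr' ?_ tendsto_const_nhds
          filter_upwards [eventually_ge_atTop ⌈|f x|⌉₊] with k hk
          have hfx : |f x| ≤ (k:ℝ)+1 := by
            calc |f x| ≤ (⌈|f x|⌉₊ : ℝ) := Nat.le_ceil _
              _ ≤ (k:ℝ) := Nat.cast_le.mpr hk
              _ ≤ (k:ℝ)+1 := by linarith
          have : fk k x = f x := by
            rw [hfk]
            dsimp only
            rw [min_eq_left (le_trans (le_abs_self _) hfx),
              max_eq_right (by cases abs_le.mp hfx; linarith)]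
          simp [this, Real.zero_rpow hp0.ne']
      have : Tendsto (fun k => (∫⁻ x, ENNReal.ofReal (min |fk k x - f x| 1 ^ p) ∂μ) ^ (1/p))
          atTop (𝓝 (0 ^ (1/p))) := key.ennrpow_const _
      rw [ENNReal.zero_rpow_of_pos hp0'] at this
      refine this.congr fun k => ?_
      rw [nuF]
      simp only [Pi.sub_apply]
end

section
/- Let (X,Σ,μ) be a measure space, 1 ≤ p < ∞, and let 𝓕 ⊆ Λ^p(X). Then lim_{M→∞} sup_{f∈𝓕} ν_p(f − T_M f) = 0 if and only if 𝓕 is almost equibounded, i.e., lim_{M→∞} sup_{f∈𝓕} μ({x : |f(x)| > M}) = 0. -/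
open MeasureTheory ENNReal Filter Topology

/-!
Write `τ_M(f) = ∫ min(|f - T_M f|, 1)^p dμ`, so that `ν_p(f - T_M f) = τ_M(f)^{1/p}`. The
integrand vanishes where `|f| ≤ M`, is at most `1` everywhere and equals `1` where
`|f| > M + 1`. Hence `μ{|f| > M + 1} ≤ τ_M(f) ≤ μ{|f| > M}`, so after taking suprema over the
family, `sup τ_M` is squeezed between two shifts of `M ↦ sup μ{|f| > M}`.
-/

lemma sub_trunc_eq_zero {M t : ℝ} (h : |t| ≤ M) : t - trunc M t = 0 := by
  rw [abs_le] at h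
  simp [trunc, min_eq_left h.2, max_eq_right h.1]

lemma one_le_abs_sub_trunc {M t : ℝ} (hM : 0 ≤ M) (h : M + 1 < |t|) :
    1 ≤ |t - trunc M t| := by
  rcases lt_abs.mp h with ht | ht
  · rw [trunc, min_eq_right (by linarith), max_eq_right (by linarith), le_abs]
    left; linarith
  · rw [trunc, min_eq_left (by linarith), max_eq_left (by linarith), le_abs]
    right; linarith

section Measure

variable {X : Type*} [MeasurableSpace X] (μ : Measure X) {p : ℝ}

lemma lintegral_sub_trunc_le_measure (hp : 0 < p) (f : X → ℝ) (M : ℝ) :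
    ∫⁻ x, ENNReal.ofReal (min |(f - trunc M ∘ f) x| 1 ^ p) ∂μ ≤ μ {x | M < |f x|} := by
  refine (lintegral_mono fun x => ?_).trans (lintegral_indicator_one_le _)
  by_cases hx : M < |f x|
  · simp only [Set.indicator_of_mem (show x ∈ {x | M < |f x|} from hx), Pi.one_apply]
    exact ENNReal.ofReal_le_one.mpr
      (Real.rpow_le_one (le_min (abs_nonneg _) zero_le_one) (min_le_right _ _) hp.le)
  · have : (f - trunc M ∘ f) x = 0 := sub_trunc_eq_zero (not_lt.mp hx)
    simp [this, Real.zero_rpow hp.ne']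

lemma measure_le_lintegral_sub_trunc {f : X → ℝ} (hf : Measurable f) {M : ℝ}
    (hM : 0 ≤ M) :
    μ {x | M + 1 < |f x|} ≤
      ∫⁻ x, ENNReal.ofReal (min |(f - trunc M ∘ f) x| 1 ^ p) ∂μ := by
  rw [← lintegral_indicator_one (measurableSet_lt measurable_const hf.abs)]
  refine lintegral_mono fun x => ?_
  by_cases hx : M + 1 < |f x|
  · simp only [Set.indicator_of_mem (show x ∈ {x | M + 1 < |f x|} from hx), Pi.one_apply]
    have h1 : 1 ≤ |(f - trunc M ∘ f) x| := one_le_abs_sub_trunc hM hx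
    rw [min_eq_right h1, Real.one_rpow, ENNReal.ofReal_one]
  · simp [Set.indicator_of_notMem (show x ∉ {x | M + 1 < |f x|} from hx)]

end Measure

lemma ENNReal.biSup_rpow {ι : Type*} (s : Set ι) (g : ι → ℝ≥0∞) {r : ℝ} (hr : 0 < r) :
    (⨆ i ∈ s, g i) ^ r = ⨆ i ∈ s, g i ^ r :=
  (ENNReal.orderIsoRpow r hr).map_iSup₂ _

lemma ENNReal.tendsto_rpow_nhds_zero_iff {α : Type*} {l : Filter α} {A : α → ℝ≥0∞}
    {r : ℝ} (hr : 0 < r) : Tendsto (fun a => A a ^ r) l (𝓝 0) ↔ Tendsto A l (𝓝 0) := by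
  have hcont {s : ℝ} (hs : 0 < s) {B : α → ℝ≥0∞} (hB : Tendsto B l (𝓝 0)) :
      Tendsto (fun a => B a ^ s) l (𝓝 0) := by
    simpa [Function.comp_def, ENNReal.zero_rpow_of_pos hs] using
      ((ENNReal.continuous_rpow_const (y := s)).tendsto 0).comp hB
  refine ⟨fun h => ?_, hcont hr⟩
  simpa only [← ENNReal.rpow_mul, mul_one_div_cancel hr.ne', ENNReal.rpow_one] using
    hcont (one_div_pos.mpr hr) h

lemma tendsto_nhds_zero_iff_of_shift_le {A B : ℝ → ℝ≥0∞}
    (hlower : ∀ᶠ M in atTop, B (M + 1) ≤ A M) (hupper : ∀ M, A M ≤ B M) :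
    Tendsto A atTop (𝓝 0) ↔ Tendsto B atTop (𝓝 0) := by
  refine ⟨fun hA => ?_, fun hB =>
    tendsto_of_tendsto_of_tendsto_of_le_of_le tendsto_const_nhds hB (fun _ => zero_le) hupper⟩
  have hshift : Tendsto (fun M : ℝ => M - 1) atTop atTop :=
    tendsto_atTop_add_const_right _ _ tendsto_id
  refine tendsto_of_tendsto_of_tendsto_of_le_of_le' tendsto_const_nhds (hA.comp hshift)
    (Eventually.of_forall fun _ => zero_le) ?_
  filter_upwards [hshift.eventually hlower] with M hM
  simpa using hM

theorem stmt14 {X : Type*} [MeasurableSpace X] (μ : Measure X) (p : ℝ) (hp : 1 ≤ p)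
    (F : Set (X → ℝ)) (hF : ∀ f ∈ F, MemLambda μ p f) :
    Tendsto (fun M : ℝ => ⨆ f ∈ F, nuF μ p (f - trunc M ∘ f)) atTop (𝓝 0) ↔
      Tendsto (fun M : ℝ => ⨆ f ∈ F, μ {x | M < |f x|}) atTop (𝓝 0) := by
  have hp0 : 0 < p := by linarith
  have hsup : ∀ M : ℝ, ⨆ f ∈ F, nuF μ p (f - trunc M ∘ f) =
      (⨆ f ∈ F, ∫⁻ x, ENNReal.ofReal (min |(f - trunc M ∘ f) x| 1 ^ p) ∂μ) ^ (1 / p) :=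
    fun M => (ENNReal.biSup_rpow F _ (one_div_pos.mpr hp0)).symm
  simp only [hsup]
  rw [ENNReal.tendsto_rpow_nhds_zero_iff (one_div_pos.mpr hp0)]
  refine tendsto_nhds_zero_iff_of_shift_le ?_ fun M =>
    iSup₂_mono fun f _ => lintegral_sub_trunc_le_measure μ hp0 f M
  filter_upwards [eventually_ge_atTop 0] with M hM
  exact iSup₂_mono fun f hf => measure_le_lintegral_sub_trunc μ (hF f hf).1 hM
end
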